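/- arXiv:math/9912086 — 3 statements merged into one kernel-verified Lean document; each statement's English description precedes it below -/
import Mathlib

section
/- Let φ : ℝ → ℝ be a continuous, increasing function on the positive reals with φ(r₀) > 0 for some r₀ > 0. Then there exists a measurable set E ⊆ ℝ⁺ of finite Lebesgue measure such that for all r > r₀ with r ∉ E, φ(r + 1/φ(r)) < 2 φ(r). -/
open MeasureTheory Set

theorem borel_lemma (φ : ℝ → ℝ) (hcont : ContinuousOn φ (Set.Ioi 0))
    (hmono : MonotoneOn φ (Set.Ioi 0)) (r₀ : ℝ) (hr₀ : 0 < r₀) (hφr₀ : 0 < φ r₀) :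
    ∃ E : Set ℝ, E ⊆ Set.Ioi 0 ∧ MeasurableSet E ∧ volume E < ⊤ ∧
      ∀ r : ℝ, r₀ < r → r ∉ E → φ (r + 1 / φ r) < 2 * φ r := by
  set c := φ r₀ with hc
  set S : ℕ → Set ℝ := fun n => {r | r₀ < r ∧ φ r < 2 ^ (n + 1) * c} with hS
  set I : ℕ → Set ℝ := fun n =>
    Icc (sSup (S n) - 1 / (2 ^ n * c)) (sSup (S n)) ∩ Ioi r₀ with hI
  refine ⟨⋃ n, I n, ?_, ?_, ?_, ?_⟩
  · exact iUnion_subset fun n =>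
      inter_subset_right.trans (fun x hx => lt_trans hr₀ hx)
  · exact MeasurableSet.iUnion fun n => measurableSet_Icc.inter measurableSet_Ioi
  · calc volume (⋃ n, I n) ≤ ∑' n, volume (I n) := measure_iUnion_le _
      _ ≤ ∑' n : ℕ, ENNReal.ofReal ((1 / 2) ^ n * (1 / c)) := by
          refine ENNReal.tsum_le_tsum fun n => ?_
          calc volume (I n)
              ≤ volume (Icc (sSup (S n) - 1 / (2 ^ n * c)) (sSup (S n))) :=
                measure_mono inter_subset_left
            _ = ENNReal.ofReal (1 / (2 ^ n * c)) := by
                rw [Real.volume_Icc, sub_sub_cancel]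
            _ = ENNReal.ofReal ((1 / 2) ^ n * (1 / c)) := by
                congr 1
                rw [div_pow, one_pow, div_mul_div_comm, one_mul]
      _ < ⊤ := by
          rw [← ENNReal.ofReal_tsum_of_nonneg (fun n => by positivity)
            (summable_geometric_two.mul_right (1 / c))]
          exact ENNReal.ofReal_lt_top
  · intro r hr hrE
    by_contra hcon
    push_neg at hcon
    have hr0 : (0 : ℝ) < r := lt_trans hr₀ hr
    have hφr : c ≤ φ r := hmono (mem_Ioi.mpr hr₀) (mem_Ioi.mpr hr0) hr.le
    have hφrpos : 0 < φ r := lt_of_lt_of_le hφr₀ hφr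
    have hupos : 0 < 1 / φ r := by positivity
    obtain ⟨s, hs⟩ : ∃ s : ℝ, s = r + 1 / φ r := ⟨_, rfl⟩
    rw [← hs] at hcon
    have hs0 : (0 : ℝ) < s := by rw [hs]; positivity
    have hsr : r < s := by rw [hs]; linarith
    -- find the dyadic level of φ r
    have hex : ∃ n : ℕ, φ r < 2 ^ (n + 1) * c := by
      obtain ⟨n, hn⟩ := pow_unbounded_of_one_lt (φ r / c) (one_lt_two (α := ℝ))
      exact ⟨n, by
        have h1 := (div_lt_iff₀ hφr₀).mp hn
        have h2 : (2 : ℝ) ^ n ≤ 2 ^ (n + 1) := pow_le_pow_right₀ one_le_two (Nat.le_succ n)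
        nlinarith⟩
    obtain ⟨n, hhigh, hlow⟩ : ∃ n : ℕ, φ r < 2 ^ (n + 1) * c ∧ 2 ^ n * c ≤ φ r := by
      refine ⟨Nat.find hex, Nat.find_spec hex, ?_⟩
      rcases Nat.eq_zero_or_pos (Nat.find hex) with h0 | hpos
      · rw [h0]; simpa using hφr
      · have hmin := Nat.find_min hex (Nat.sub_lt hpos one_pos)
        push_neg at hmin
        calc 2 ^ Nat.find hex * c = 2 ^ (Nat.find hex - 1 + 1) * c := by
              rw [Nat.sub_add_cancel hpos]
          _ ≤ φ r := hmin
    have hφs : 2 ^ (n + 1) * c ≤ φ s := by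
      have : 2 * φ r ≤ φ s := hcon
      have h2 : (2 : ℝ) ^ (n + 1) * c = 2 * (2 ^ n * c) := by ring
      nlinarith
    have hrS : r ∈ S n := ⟨hr, hhigh⟩
    have hub : ∀ x ∈ S n, x ≤ s := by
      intro x hx
      by_contra hxs
      push_neg at hxs
      have hx0 : (0 : ℝ) < x := lt_trans hr₀ hx.1
      have := hmono (mem_Ioi.mpr hs0) (mem_Ioi.mpr hx0) hxs.le
      exact absurd hx.2 (by linarith)
    have hbdd : BddAbove (S n) := ⟨s, hub⟩
    have hrb : r ≤ sSup (S n) := le_csSup hbdd hrS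
    have hbs : sSup (S n) ≤ s := csSup_le ⟨r, hrS⟩ hub
    have hpow : (0 : ℝ) < 2 ^ n * c := by positivity
    have hul : 1 / φ r ≤ 1 / (2 ^ n * c) := one_div_le_one_div_of_le hpow hlow
    have hrmem : r ∈ I n := by
      refine ⟨⟨?_, hrb⟩, mem_Ioi.mpr hr⟩
      have heq : s - 1 / φ r = r := by rw [hs]; ring
      linarith
    exact hrE (mem_iUnion.mpr ⟨n, hrmem⟩)
end

section
/- Let F : ℂ → ℂ be an entire (holomorphic on all of ℂ) function and let 0 < r < R. Then max_{|z|=r} log |F(z)| ≤ ((R+r)/(R-r)) · (1/(2π)) ∫₀^{2π} log⁺ |F(R e^{iθ})| dθ, where log⁺ t = max(0, log t). -/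
/-!
By the Poisson–Jensen inequality, `log ‖F w‖` is at most the Poisson integral of `log ‖F‖` over
the circle of radius `R`. Indeed, dividing out the finitely many zeros of `F` in the closed disc
leaves a zero-free `g` for which `log ‖g‖` is harmonic, so the Poisson formula holds with equality;
a zero `u` contributes `log ‖· - u‖`, whose Poisson integral is `log ‖w - u‖` if `u` is on the
circle and `log ‖(R² - ū w) / R‖ ≥ log ‖w - u‖` if `u` is inside, because on the circle
`‖z - u‖ = ‖(R² - ū z) / R‖` and the right-hand side is harmonic in `z`. Replacing `log` by `log⁺`
and bounding the Poisson kernel by `(R + ‖w‖) / (R - ‖w‖)` gives the estimate.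
-/

open Complex Real MeasureTheory

open Metric Filter MeromorphicOn InnerProductSpace ValueDistribution
open scoped ComplexConjugate

theorem norm_sq_sub_conj_mul_sq (R : ℝ) (u w : ℂ) :
    ‖(R : ℂ) ^ 2 - conj u * w‖ ^ 2 =
      (R * ‖w - u‖) ^ 2 + (R ^ 2 - ‖u‖ ^ 2) * (R ^ 2 - ‖w‖ ^ 2) := by
  rw [← ofReal_pow]
  simp only [mul_pow, Complex.sq_norm, Complex.normSq_apply, sub_re, sub_im, mul_re, mul_im,
    conj_re, conj_im, ofReal_re, ofReal_im]
  ring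

theorem norm_sq_sub_conj_mul_of_norm_eq {R : ℝ} (hR : 0 ≤ R) (u : ℂ) {z : ℂ} (hz : ‖z‖ = R) :
    ‖(R : ℂ) ^ 2 - conj u * z‖ = R * ‖z - u‖ := by
  rw [← pow_left_inj₀ (norm_nonneg _) (by positivity) two_ne_zero, norm_sq_sub_conj_mul_sq, hz,
    sub_self, mul_zero, add_zero]

theorem mul_norm_sub_le_norm_sq_sub_conj_mul {R : ℝ} (hR : 0 ≤ R) {u w : ℂ} (hu : ‖u‖ ≤ R)
    (hw : ‖w‖ ≤ R) : R * ‖w - u‖ ≤ ‖(R : ℂ) ^ 2 - conj u * w‖ := by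
  rw [← pow_le_pow_iff_left₀ (by positivity) (norm_nonneg _) two_ne_zero, norm_sq_sub_conj_mul_sq]
  have : 0 ≤ (R ^ 2 - ‖u‖ ^ 2) * (R ^ 2 - ‖w‖ ^ 2) :=
    mul_nonneg (sub_nonneg.2 (by gcongr)) (sub_nonneg.2 (by gcongr))
  linarith

lemma poissonKernel_nonneg {c w z : ℂ} (h : ‖w - c‖ ≤ ‖z - c‖) : 0 ≤ poissonKernel c w z :=
  div_nonneg (sub_nonneg.2 (by gcongr)) (sq_nonneg _)

lemma poissonKernel_le {c w z : ℂ} {R : ℝ} (hz : z ∈ sphere c R) (hw : w ∈ ball c R) :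
    poissonKernel c w z ≤ (R + ‖w - c‖) / (R - ‖w - c‖) := by
  rw [poissonKernel_eq_re_herglotzRieszKernel]
  exact re_herglotzRieszKernel_le hz hw

lemma CircleIntegrable.poissonKernel_smul {c w : ℂ} {R : ℝ} {f : ℂ → ℝ}
    (hf : CircleIntegrable f c R) (hw : w ∈ ball c R) :
    CircleIntegrable (poissonKernel c w • f) c R := by
  rw [poissonKernel_eq_re_herglotzRieszKernel]
  exact hf.continuousOn_smul
    (continuous_re.comp_continuousOn (continuousOn_herglotzRieszKernel_sphere hw))

lemma circleAverage_poissonKernel_smul_log_norm_sub_of_mem_ball {R : ℝ} {u w : ℂ}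
    (hu : u ∈ ball 0 R) (hw : w ∈ ball 0 R) :
    circleAverage (poissonKernel 0 w • fun z ↦ Real.log ‖z - u‖) 0 R =
      Real.log ‖((R : ℂ) ^ 2 - conj u * w) / R‖ := by
  have hR : 0 < R := pos_of_mem_ball hw
  have hR' : ‖(R : ℂ)‖ = R := by simp [hR.le]
  have hu' : ‖u‖ < R := mem_ball_zero_iff.1 hu
  have hne_zero (z : ℂ) (hz : z ∈ closedBall 0 R) : ((R : ℂ) ^ 2 - conj u * z) / R ≠ 0 := by
    have : ‖conj u * z‖ < ‖(R : ℂ) ^ 2‖ := by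
      rw [norm_mul, RCLike.norm_conj, norm_pow, hR', sq]
      nlinarith [norm_nonneg u, norm_nonneg z, mem_closedBall_zero_iff.1 hz]
    exact div_ne_zero (sub_ne_zero.2 (fun h ↦ this.ne (by rw [h]))) (by exact_mod_cast hR.ne')
  have hsphere : Set.EqOn (poissonKernel 0 w • fun z ↦ Real.log ‖z - u‖)
      (poissonKernel 0 w • fun z ↦ Real.log ‖((R : ℂ) ^ 2 - conj u * z) / R‖) (sphere 0 |R|) := by
    intro z hz
    rw [abs_of_pos hR, mem_sphere_zero_iff_norm] at hz
    simp only [Pi.smul_apply', smul_eq_mul]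
    rw [norm_div, hR', norm_sq_sub_conj_mul_of_norm_eq hR.le u hz, mul_div_cancel_left₀ _ hR.ne']
  rw [circleAverage_congr_sphere hsphere]
  exact HarmonicOnNhd.circleAverage_poissonKernel_smul
    (fun z hz ↦ AnalyticAt.harmonicAt_log_norm (by fun_prop) (hne_zero z hz)) hw

lemma log_norm_sub_le_circleAverage_poissonKernel_smul {R : ℝ} {u w : ℂ}
    (hu : u ∈ closedBall 0 R) (hw : w ∈ ball 0 R) (huw : w ≠ u) :
    Real.log ‖w - u‖ ≤ circleAverage (poissonKernel 0 w • fun z ↦ Real.log ‖z - u‖) 0 R := by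
  rw [← ball_union_sphere] at hu
  rcases hu with hu | hu
  · have hR : 0 < R := pos_of_mem_ball hw
    rw [circleAverage_poissonKernel_smul_log_norm_sub_of_mem_ball hu hw, norm_div, norm_real,
      Real.norm_of_nonneg hR.le]
    refine Real.log_le_log (norm_pos_iff.2 (sub_ne_zero.2 huw)) ((le_div_iff₀ hR).2 ?_)
    rw [mul_comm]
    exact mul_norm_sub_le_norm_sq_sub_conj_mul hR.le (mem_ball_zero_iff.1 hu).le
      (mem_ball_zero_iff.1 hw).le
  · rw [poissonKernel_eq_re_herglotzRieszKernel]
    exact (circleAverage_re_herglotzRieszKernel_mul_log hu hw).ge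

lemma circleAverage_poissonKernel_smul_eq_sum_add {R : ℝ} {w : ℂ} {f : ℂ → ℝ} {g : ℂ → ℂ}
    {s : Finset ℂ} {a : ℂ → ℝ} (hw : w ∈ ball 0 R) (hg : AnalyticOnNhd ℂ g (closedBall 0 R))
    (hg0 : ∀ z ∈ closedBall 0 R, g z ≠ 0)
    (hf : f =ᶠ[codiscreteWithin (closedBall 0 R)]
      ∑ u ∈ s, (a u * Real.log ‖· - u‖) + (Real.log ‖g ·‖)) :
    circleAverage (poissonKernel 0 w • f) 0 R =
      ∑ u ∈ s, a u * circleAverage (poissonKernel 0 w • fun z ↦ Real.log ‖z - u‖) 0 R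
        + Real.log ‖g w‖ := by
  have hR : 0 < R := pos_of_mem_ball hw
  have hint (u : ℂ) : CircleIntegrable (poissonKernel 0 w • fun z ↦ Real.log ‖z - u‖) 0 R :=
    (analyticOnNhd_id.sub analyticOnNhd_const).meromorphicOn.circleIntegrable_log_norm
      |>.poissonKernel_smul hw
  have hgint : CircleIntegrable (poissonKernel 0 w • fun z ↦ Real.log ‖g z‖) 0 R := by
    refine (hg.mono ?_).meromorphicOn.circleIntegrable_log_norm.poissonKernel_smul hw
    simpa [abs_of_pos hR] using sphere_subset_closedBall
  calc circleAverage (poissonKernel 0 w • f) 0 R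
    _ = circleAverage (∑ u ∈ s, a u • (poissonKernel 0 w • fun z ↦ Real.log ‖z - u‖)
          + poissonKernel 0 w • fun z ↦ Real.log ‖g z‖) 0 R := by
      refine circleAverage_congr_codiscreteWithin ?_ hR.ne'
      rw [abs_of_pos hR]
      filter_upwards [codiscreteWithin_mono sphere_subset_closedBall hf] with z hz
      simp [hz, Finset.mul_sum, mul_add, mul_left_comm]
    _ = ∑ u ∈ s, a u * circleAverage (poissonKernel 0 w • fun z ↦ Real.log ‖z - u‖) 0 R
          + circleAverage (poissonKernel 0 w • fun z ↦ Real.log ‖g z‖) 0 R := by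
      rw [circleAverage_add (CircleIntegrable.sum s fun u _ ↦ (hint u).const_smul) hgint,
        circleAverage_sum fun u _ ↦ (hint u).const_smul]
      simp [circleAverage_smul]
    _ = _ := by
      rw [HarmonicOnNhd.circleAverage_poissonKernel_smul
        (fun z hz ↦ (hg z hz).harmonicAt_log_norm (hg0 z hz)) hw]

theorem AnalyticOnNhd.log_norm_le_circleAverage_poissonKernel_smul {F : ℂ → ℂ} {R : ℝ} {w : ℂ}
    (hF : AnalyticOnNhd ℂ F (closedBall 0 R)) (hw : w ∈ ball 0 R) (hFw : F w ≠ 0) :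
    Real.log ‖F w‖ ≤ circleAverage (poissonKernel 0 w • fun z ↦ Real.log ‖F z‖) 0 R := by
  have hR : 0 < R := pos_of_mem_ball hw
  set U := closedBall (0 : ℂ) R
  have hwU : w ∈ U := ball_subset_closedBall hw
  have hord : ∀ u : U, meromorphicOrderAt F u ≠ ⊤ := by
    refine (hF.meromorphicOn.exists_meromorphicOrderAt_ne_top_iff_forall
      (isConnected_closedBall hR.le)).1 ⟨⟨w, hwU⟩, ?_⟩
    simp [(hF w hwU).meromorphicOrderAt_eq, (hF w hwU).analyticOrderAt_eq_zero.2 hFw]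
  set D := divisor F U
  have hD : D.support.Finite := D.finiteSupport (isCompact_closedBall 0 R)
  obtain ⟨g, hg, hg0, hFg⟩ := hF.meromorphicOn.extract_zeros_poles hord hD
  set s := hD.toFinset
  have hlog_eq : (Real.log ‖F ·‖) =ᶠ[codiscreteWithin U]
      ∑ u ∈ s, (D u * Real.log ‖· - u‖) + (Real.log ‖g ·‖) := by
    rw [← finsum_eq_sum_of_support_subset _ (fun u hu ↦ ?_)]
    · exact extract_zeros_poles_log hg0 hFg
    · simp only [s, hD.coe_toFinset, Function.mem_support]
      rintro h
      exact hu (funext fun x ↦ by simp [h])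
  have hlog_w : Real.log ‖F w‖ = ∑ u ∈ s, D u * Real.log ‖w - u‖ + Real.log ‖g w‖ := by
    have hacc : AccPt w (𝓟 U) := by
      rw [show U = closure (ball 0 R) from (closure_ball _ hR.ne').symm]
      exact isOpen_ball.perfect_closure.acc w (subset_closure hw)
    rw [← (hF w hwU).meromorphicTrailingCoeffAt_of_ne_zero hFw,
      log_norm_meromorphicTrailingCoeffAt_extract_zeros_poles hD hwU hacc
        (hF w hwU).meromorphicAt (hg w hwU) (hg0 ⟨w, hwU⟩) hFg,
      finsum_eq_sum_of_support_subset _ (fun u hu ↦ ?_)]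
    simp only [s, hD.coe_toFinset, Function.mem_support]
    rintro h
    exact hu (by simp [h])
  rw [hlog_w, circleAverage_poissonKernel_smul_eq_sum_add hw hg (fun z hz ↦ hg0 ⟨z, hz⟩) hlog_eq]
  gcongr with u hu
  · exact_mod_cast hF.divisor_nonneg u
  · refine log_norm_sub_le_circleAverage_poissonKernel_smul
      (D.supportWithinDomain (by simpa [s] using hu)) hw ?_
    rintro rfl
    simp [s, D, hF.divisor_apply hwU, (hF w hwU).analyticOrderAt_eq_zero.2 hFw] at hu

theorem AnalyticOnNhd.log_norm_le_mul_proximity {F : ℂ → ℂ} {R : ℝ} {w : ℂ}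
    (hF : AnalyticOnNhd ℂ F (closedBall 0 R)) (hw : w ∈ ball 0 R) :
    Real.log ‖F w‖ ≤ (R + ‖w‖) / (R - ‖w‖) * proximity F ⊤ R := by
  have hwR : ‖w‖ < R := mem_ball_zero_iff.1 hw
  have hC : 0 ≤ (R + ‖w‖) / (R - ‖w‖) := div_nonneg (by linarith [norm_nonneg w]) (by linarith)
  by_cases hFw : F w = 0
  · simpa [hFw] using mul_nonneg hC (proximity_nonneg R)
  have hsphere : sphere (0 : ℂ) |R| = sphere 0 R := by rw [abs_of_pos (pos_of_mem_ball hw)]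
  have hmero : MeromorphicOn F (sphere 0 |R|) :=
    hF.meromorphicOn.mono_set (hsphere ▸ sphere_subset_closedBall)
  have hlog_int := hmero.circleIntegrable_log_norm.poissonKernel_smul hw
  have hposLog_int := hmero.circleIntegrable_posLog_norm
  rw [proximity_top, ← smul_eq_mul, ← circleAverage_smul]
  calc Real.log ‖F w‖
    _ ≤ circleAverage (poissonKernel 0 w • fun z ↦ Real.log ‖F z‖) 0 R :=
      hF.log_norm_le_circleAverage_poissonKernel_smul hw hFw
    _ ≤ circleAverage (poissonKernel 0 w • fun z ↦ log⁺ ‖F z‖) 0 R := by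
      refine circleAverage_mono hlog_int (hposLog_int.poissonKernel_smul hw) fun z hz ↦ ?_
      rw [hsphere] at hz
      exact mul_le_mul_of_nonneg_left (le_max_right _ _)
        (poissonKernel_nonneg (by
          rw [sub_zero, sub_zero, mem_sphere_zero_iff_norm.1 hz]; exact hwR.le))
    _ ≤ circleAverage (((R + ‖w‖) / (R - ‖w‖)) • fun z ↦ log⁺ ‖F z‖) 0 R := by
      refine circleAverage_mono (hposLog_int.poissonKernel_smul hw) hposLog_int.const_smul
        fun z hz ↦ ?_
      rw [hsphere] at hz
      simpa using mul_le_mul_of_nonneg_right (poissonKernel_le hz hw) posLog_nonneg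

theorem max_log_abs_le_proximity_general (F : ℂ → ℂ) (hF : Differentiable ℂ F)
    (r R : ℝ) (hrR : r < R) :
    ∀ z : ℂ, ‖z‖ = r →
      Real.log ‖F z‖ ≤
        ((R + r) / (R - r)) * ((1 / (2 * π)) *
          ∫ θ in (0:ℝ)..(2 * π),
            max (Real.log ‖F (R * Complex.exp (θ * Complex.I))‖) 0) := by
  intro z hz
  have hprox : proximity F ⊤ R = (1 / (2 * π)) *
      ∫ θ in (0:ℝ)..(2 * π), max (Real.log ‖F (R * Complex.exp (θ * Complex.I))‖) 0 := by
    simp [proximity_top, circleAverage_def, circleMap, Real.posLog, max_comm]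
  rw [← hz, ← hprox]
  exact AnalyticOnNhd.log_norm_le_mul_proximity (fun z _ ↦ hF.analyticAt z)
    (mem_ball_zero_iff.2 (hz ▸ hrR))

theorem max_log_abs_le_proximity (F : ℂ → ℂ) (hF : Differentiable ℂ F)
    (r R : ℝ) (hr : 0 < r) (hrR : r < R) :
    ∀ z : ℂ, ‖z‖ = r →
      Real.log ‖F z‖ ≤
        ((R + r) / (R - r)) * ((1 / (2 * π)) *
          ∫ θ in (0:ℝ)..(2 * π),
            max (Real.log ‖F (R * Complex.exp (θ * Complex.I))‖) 0) :=
  max_log_abs_le_proximity_general F hF r R hrR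
end

section
/- Let G : ℂ → ℂ be entire, and suppose there exist constants ρ ≥ 0 and r₀ > 0 such that (1/(2π)) ∫₀^{2π} |G(r e^{iθ})|² dθ ≤ r^ρ for all r ≥ r₀. Then G is a polynomial of degree at most ρ/2. -/
/-!
The Cauchy estimate bounds the `n`-th Taylor coefficient of an entire function by its mean
modulus on the circle of radius `r`, divided by `r ^ n`; by Cauchy–Schwarz the mean modulus is at
most the square root of the `L²` mean, hence `O(r ^ (ρ / 2))`. Letting `r → ∞` kills every
coefficient of index `n > ρ / 2`, so the Taylor series is a polynomial of degree at most `ρ / 2`.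
-/

open Complex Real MeasureTheory Filter Topology

namespace Real

theorem circleAverage_le_of_circleAverage_sq_le {f : ℂ → ℝ} {c : ℂ} {R t : ℝ}
    (hf : CircleIntegrable f c R) (hf₂ : CircleIntegrable (fun z ↦ f z ^ 2) c R) (ht : 0 < t)
    (h : circleAverage (fun z ↦ f z ^ 2) c R ≤ t ^ 2) :
    circleAverage f c R ≤ t := by
  have hsmul : CircleIntegrable (fun z ↦ (2 * t)⁻¹ • f z ^ 2) c R := hf₂.const_fun_smul
  have hmajorant : CircleIntegrable (fun z ↦ (2 * t)⁻¹ • f z ^ 2 + t / 2) c R :=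
    hsmul.fun_add (circleIntegrable_const _ c R)
  have hamgm : ∀ z, f z ≤ (2 * t)⁻¹ • f z ^ 2 + t / 2 := fun z ↦ by
    rw [smul_eq_mul, ← sub_nonneg]
    have : (2 * t)⁻¹ * f z ^ 2 + t / 2 - f z = (2 * t)⁻¹ * (f z - t) ^ 2 := by
      field_simp; ring
    rw [this]; positivity
  calc circleAverage f c R
      ≤ circleAverage (fun z ↦ (2 * t)⁻¹ • f z ^ 2 + t / 2) c R :=
        circleAverage_mono hf hmajorant fun z _ ↦ hamgm z
    _ = (2 * t)⁻¹ * circleAverage (fun z ↦ f z ^ 2) c R + t / 2 := by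
        rw [circleAverage_fun_add hsmul (circleIntegrable_const _ c R),
          circleAverage_fun_smul, circleAverage_const, smul_eq_mul]
    _ ≤ (2 * t)⁻¹ * t ^ 2 + t / 2 := by gcongr
    _ = t := by field_simp; ring

end Real

namespace Differentiable

variable {E : Type*} [NormedAddCommGroup E] [NormedSpace ℂ E] [CompleteSpace E] {f : ℂ → E}

theorem cauchyPowerSeries_eq (hf : Differentiable ℂ f) (c : ℂ) {R R' : ℝ} (hR : 0 < R)
    (hR' : 0 < R') : cauchyPowerSeries f c R = cauchyPowerSeries f c R' := by
  lift R to NNReal using hR.le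
  lift R' to NNReal using hR'.le
  exact (hf.hasFPowerSeriesOnBall c hR).hasFPowerSeriesAt.eq_formalMultilinearSeries
    (hf.hasFPowerSeriesOnBall c hR').hasFPowerSeriesAt

theorem cauchyPowerSeries_eq_zero_of_circleAverage_norm_le (hf : Differentiable ℂ f) {c : ℂ}
    {C s : ℝ} (hgrowth : ∀ᶠ r in atTop, circleAverage (‖f ·‖) c r ≤ C * r ^ s) {n : ℕ}
    (hn : s < n) : cauchyPowerSeries f c 1 n = 0 := by
  have hle : ∀ᶠ r in atTop, ‖cauchyPowerSeries f c 1 n‖ ≤ C * r ^ (s - n) := by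
    filter_upwards [hgrowth, eventually_gt_atTop 0] with r hr hr₀
    rw [hf.cauchyPowerSeries_eq c one_pos hr₀]
    calc ‖cauchyPowerSeries f c r n‖ ≤ circleAverage (‖f ·‖) c r * |r|⁻¹ ^ n :=
          norm_cauchyPowerSeries_le f c r n
      _ ≤ C * r ^ s * |r|⁻¹ ^ n := by gcongr
      _ = C * r ^ (s - n) := by
          rw [abs_of_pos hr₀, rpow_sub hr₀, rpow_natCast, inv_pow, mul_assoc,
            div_eq_mul_inv]
  have hlim : Tendsto (fun r : ℝ ↦ C * r ^ (s - n)) atTop (𝓝 0) := by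
    simpa [neg_sub] using (tendsto_rpow_neg_atTop (sub_pos.2 hn)).const_mul C
  exact norm_le_zero_iff.1 (ge_of_tendsto hlim hle)

end Differentiable

theorem HasFPowerSeriesOnBall.exists_polynomial_of_coeff_eq_zero {𝕜 : Type*}
    [NontriviallyNormedField 𝕜] {f : 𝕜 → 𝕜} {p : FormalMultilinearSeries 𝕜 𝕜 𝕜} {c : 𝕜}
    (hf : HasFPowerSeriesOnBall f p c ⊤) {N : ℕ} (hp : ∀ n, N < n → p n = 0) :
    ∃ P : Polynomial 𝕜, P.natDegree ≤ N ∧ ∀ z, f z = P.eval (z - c) := by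
  refine ⟨∑ n ∈ Finset.range (N + 1), Polynomial.C (p.coeff n) * Polynomial.X ^ n,
    ?_, ?_⟩
  · refine Polynomial.natDegree_sum_le_of_forall_le _ _ fun n hn ↦ ?_
    exact (Polynomial.natDegree_C_mul_X_pow_le _ _).trans (Finset.mem_range_succ_iff.1 hn)
  · intro z
    have hsum : HasSum (fun n ↦ p n fun _ ↦ z - c) (f z) := by
      simpa using hf.hasSum (y := z - c) (by simp)
    have hfinite : HasSum (fun n ↦ p n fun _ ↦ z - c)
        (∑ n ∈ Finset.range (N + 1), p n fun _ ↦ z - c) :=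
      hasSum_sum_of_ne_finset_zero fun n hn ↦ by
        simp [hp n (by simpa using hn)]
    rw [hsum.unique hfinite, Polynomial.eval_finsetSum]
    refine Finset.sum_congr rfl fun n _ ↦ ?_
    rw [p.apply_eq_pow_smul_coeff, Polynomial.eval_mul, Polynomial.eval_C, Polynomial.eval_pow,
      Polynomial.eval_X, smul_eq_mul, mul_comm]

theorem L2_growth_implies_polynomial_general (G : ℂ → ℂ) (hG : Differentiable ℂ G)
    (ρ : ℝ) (hρ : 0 ≤ ρ) (r₀ : ℝ)
    (hbound : ∀ r : ℝ, r₀ ≤ r →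
      (1 / (2 * π)) * ∫ θ in (0:ℝ)..(2 * π),
          ‖G (r * Complex.exp (θ * Complex.I))‖ ^ 2 ≤ r ^ ρ) :
    ∃ P : Polynomial ℂ, (∀ z : ℂ, G z = P.eval z) ∧ (P.natDegree : ℝ) ≤ ρ / 2 := by
  have hcont : Continuous (‖G ·‖) := hG.continuous.norm
  have hL1 : ∀ᶠ r in atTop, circleAverage (‖G ·‖) 0 r ≤ 1 * r ^ (ρ / 2) := by
    filter_upwards [eventually_ge_atTop r₀, eventually_gt_atTop 0] with r hr hr₀
    have hL2 : circleAverage (fun z ↦ ‖G z‖ ^ 2) 0 r ≤ (r ^ (ρ / 2)) ^ 2 := by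
      rw [← rpow_mul_natCast hr₀.le]
      simpa [circleAverage_def, circleMap] using hbound r hr
    rw [one_mul]
    exact circleAverage_le_of_circleAverage_sq_le hcont.continuousOn.circleIntegrable'
      (hcont.pow 2).continuousOn.circleIntegrable' (rpow_pos_of_pos hr₀ _) hL2
  have hcoeff : ∀ n, ⌊ρ / 2⌋₊ < n → cauchyPowerSeries G 0 1 n = 0 := fun n hn ↦
    hG.cauchyPowerSeries_eq_zero_of_circleAverage_norm_le hL1
      ((Nat.floor_lt (by positivity)).1 hn)
  obtain ⟨P, hdeg, hP⟩ :=
    (hG.hasFPowerSeriesOnBall 0 one_pos).exists_polynomial_of_coeff_eq_zero hcoeff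
  exact ⟨P, by simpa using hP, (Nat.cast_le.2 hdeg).trans (Nat.floor_le (by positivity))⟩

theorem L2_growth_implies_polynomial (G : ℂ → ℂ) (hG : Differentiable ℂ G)
    (ρ : ℝ) (hρ : 0 ≤ ρ) (r₀ : ℝ) (hr₀ : 0 < r₀)
    (hbound : ∀ r : ℝ, r₀ ≤ r →
      (1 / (2 * π)) * ∫ θ in (0:ℝ)..(2 * π),
          ‖G (r * Complex.exp (θ * Complex.I))‖ ^ 2 ≤ r ^ ρ) :
    ∃ P : Polynomial ℂ, (∀ z : ℂ, G z = P.eval z) ∧ (P.natDegree : ℝ) ≤ ρ / 2 :=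
  L2_growth_implies_polynomial_general G hG ρ hρ r₀ hbound
end
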